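/- For (x^n) generated by iPiano with α_n ≥ c₁ ∈ (0,1] and β_n ∈ [0,1), with x^{-1} = x^0, it holds for all N that Σ_{n=0}^N ‖r(x^n)‖ ≤ (2/c₁) Σ_{n=0}^N ‖x^{n+1} − x^n‖, where r is the proximal residual at step size 1. -/

import Mathlib

/-!
Weighting the variational inequalities of the two proximal problems that define `x^{n+1}`
(step `α_n`, momentum `e = β_n (x^n - x^{n-1})`) and `Q n` (step `1`) by `1` and `α_n` and adding
them gives the monotonicity inequality `⟪s + e - α_n r, s - r⟫ ≤ 0` for the residual
`r = x^n - Q n` and the step `s = x^n - x^{n+1}`. Elementary Euclidean geometry turns it into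
`min(α_n, 1) ‖r‖ ≤ ‖s‖ + ‖e‖`. Summing over `n`, the momentum terms are at most the step
lengths shifted by one, which produces the factor `2 / c₁`.
-/

open RealInnerProductSpace

variable {N : ℕ}

/-- `p` is the proximal point of `g` with parameter `α > 0` at `w`, i.e. a minimizer of
`x ↦ ‖x - w‖²/2 + α g x`. -/
def IsProxPt (g : EuclideanSpace ℝ (Fin N) → EReal) (α : ℝ)
    (w p : EuclideanSpace ℝ (Fin N)) : Prop :=
  ∀ x, ((‖p - w‖ ^ 2 / 2 : ℝ) : EReal) + (α : EReal) * g p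
      ≤ ((‖x - w‖ ^ 2 / 2 : ℝ) : EReal) + (α : EReal) * g x

open Filter Topology

section InnerProduct

variable {E : Type*} [NormedAddCommGroup E] [InnerProductSpace ℝ E]

lemma norm_le_add_norm_of_inner_nonpos {r s e : E} {α : ℝ} (hα : 1 ≤ α)
    (h : ⟪s + e - α • r, s - r⟫ ≤ 0) : ‖r‖ ≤ ‖s‖ + ‖e‖ := by
  set z := s - r
  have hexp : ⟪s + e - α • r, z⟫ = ‖z‖ ^ 2 + (1 - α) * ⟪r, z⟫ + ⟪e, z⟫ := by
    rw [show s + e - α • r = z + (1 - α) • r + e by simp only [z]; module, inner_add_left,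
      inner_add_left, real_inner_self_eq_norm_sq, real_inner_smul_left]
  have hez := neg_le_of_abs_le (abs_real_inner_le_norm e z)
  rcases le_or_gt 0 ⟪r, z⟫ with hrz | hrz
  · have hrs : ‖r‖ ^ 2 ≤ ‖s‖ ^ 2 := by
      rw [show s = r + z by simp only [z]; abel, norm_add_sq_real]
      nlinarith [sq_nonneg ‖z‖]
    linarith [(sq_le_sq₀ (norm_nonneg r) (norm_nonneg s)).mp hrs, norm_nonneg e]
  · have hz : ‖z‖ ≤ ‖e‖ := by nlinarith [norm_nonneg z, norm_nonneg e]
    calc ‖r‖ = ‖s - z‖ := by simp only [z, sub_sub_cancel]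
      _ ≤ ‖s‖ + ‖z‖ := norm_sub_le _ _
      _ ≤ ‖s‖ + ‖e‖ := by linarith

lemma mul_norm_le_add_norm_of_inner_nonpos {r s e : E} {α : ℝ} (hα0 : 0 ≤ α) (hα : α ≤ 1)
    (h : ⟪s + e - α • r, s - r⟫ ≤ 0) : α * ‖r‖ ≤ ‖s‖ + ‖e‖ := by
  set z := s - r
  have hexp : ⟪s + e - α • r, z⟫ = α * ‖z‖ ^ 2 + (1 - α) * ⟪s, z⟫ + ⟪e, z⟫ := by
    rw [show s + e - α • r = α • z + (1 - α) • s + e by simp only [z]; module, inner_add_left,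
      inner_add_left, real_inner_smul_left, real_inner_smul_left, real_inner_self_eq_norm_sq]
  have hez := neg_le_of_abs_le (abs_real_inner_le_norm e z)
  have hsz := neg_le_of_abs_le (abs_real_inner_le_norm s z)
  have hz : α * ‖z‖ ≤ (1 - α) * ‖s‖ + ‖e‖ := by
    have hzz : ‖z‖ * (α * ‖z‖) ≤ ‖z‖ * ((1 - α) * ‖s‖ + ‖e‖) := by
      nlinarith [mul_le_mul_of_nonneg_left hsz (sub_nonneg.mpr hα)]
    rcases (norm_nonneg z).eq_or_lt with hz0 | hz0
    · rw [← hz0]; nlinarith [norm_nonneg e, norm_nonneg s]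
    · exact le_of_mul_le_mul_left hzz hz0
  calc α * ‖r‖ = α * ‖s - z‖ := by simp only [z, sub_sub_cancel]
    _ ≤ α * (‖s‖ + ‖z‖) := mul_le_mul_of_nonneg_left (norm_sub_le _ _) hα0
    _ ≤ ‖s‖ + ‖e‖ := by linarith

lemma mul_norm_le_add_norm_of_inner_nonpos_of_le {r s e : E} {c α : ℝ} (hc : 0 ≤ c)
    (hc1 : c ≤ 1) (hcα : c ≤ α) (h : ⟪s + e - α • r, s - r⟫ ≤ 0) : c * ‖r‖ ≤ ‖s‖ + ‖e‖ := by
  rcases le_total α 1 with hα | hα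
  · calc c * ‖r‖ ≤ α * ‖r‖ := mul_le_mul_of_nonneg_right hcα (norm_nonneg r)
      _ ≤ ‖s‖ + ‖e‖ := mul_norm_le_add_norm_of_inner_nonpos (hc.trans hcα) hα h
  · calc c * ‖r‖ ≤ ‖r‖ := mul_le_of_le_one_left (norm_nonneg r) hc1
      _ ≤ ‖s‖ + ‖e‖ := norm_le_add_norm_of_inner_nonpos hα h

end InnerProduct

/-- The `n = 0` term on the left vanishes because `0 - 1 = 0` in `ℕ`. -/
lemma sum_range_norm_sub_pred_le {E : Type*} [SeminormedAddCommGroup E] (x : ℕ → E) (M : ℕ) :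
    ∑ n ∈ Finset.range (M + 1), ‖x n - x (n - 1)‖
      ≤ ∑ n ∈ Finset.range (M + 1), ‖x (n + 1) - x n‖ := by
  rw [Finset.sum_range_succ', Finset.sum_range_succ]
  simp only [Nat.add_sub_cancel, Nat.zero_sub, sub_self, norm_zero, add_zero]
  exact le_add_of_nonneg_right (norm_nonneg _)

def ConvexEReal (g : EuclideanSpace ℝ (Fin N) → EReal) : Prop :=
  ∀ (x y : EuclideanSpace ℝ (Fin N)) (a b : ℝ), 0 ≤ a → 0 ≤ b → a + b = 1 →
    g (a • x + b • y) ≤ (a : EReal) * g x + (b : EReal) * g y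

namespace IsProxPt

variable {g : EuclideanSpace ℝ (Fin N) → EReal} {α : ℝ} {w p z : EuclideanSpace ℝ (Fin N)}

lemma le_coe (hα : 0 ≤ α) (hp : IsProxPt g α w p) {c : ℝ} (hz : g z ≤ c) :
    ((‖p - w‖ ^ 2 / 2 : ℝ) : EReal) + (α : EReal) * g p
      ≤ ((‖z - w‖ ^ 2 / 2 + α * c : ℝ) : EReal) := by
  refine (hp z).trans ?_
  rw [EReal.coe_add, EReal.coe_mul]
  gcongr

lemma ne_top (hproper : ∃ z, g z ≠ ⊤) (hα : 0 < α) (hp : IsProxPt g α w p) : g p ≠ ⊤ := by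
  obtain ⟨z, hz⟩ := hproper
  intro htop
  have h := hp.le_coe hα.le (EReal.le_coe_toReal hz)
  rw [htop, EReal.coe_mul_top_of_pos hα, EReal.coe_add_top, top_le_iff] at h
  exact EReal.coe_ne_top _ h

lemma inner_le (hconv : ConvexEReal g) (hα : 0 ≤ α) (hp : IsProxPt g α w p) {P Z : ℝ}
    (hP : g p = P) (hZ : g z = Z) : ⟪w - p, z - p⟫ ≤ α * (Z - P) := by
  have hsegment : ∀ t ∈ Set.Ioc (0 : ℝ) 1,
      ⟪w - p, z - p⟫ ≤ α * (Z - P) + t * (‖z - p‖ ^ 2 / 2) := by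
    rintro t ⟨ht0, ht1⟩
    have hconvt : g ((1 - t) • p + t • z) ≤ (((1 - t) * P + t * Z : ℝ) : EReal) := by
      have := hconv p z (1 - t) t (by linarith) ht0.le (by ring)
      rwa [hP, hZ, ← EReal.coe_mul, ← EReal.coe_mul, ← EReal.coe_add] at this
    have h := hp.le_coe hα hconvt
    rw [hP, ← EReal.coe_mul, ← EReal.coe_add, EReal.coe_le_coe_iff,
      show (1 - t) • p + t • z - w = (p - w) + t • (z - p) by module, norm_add_sq_real,
      inner_smul_right, norm_smul, Real.norm_of_nonneg ht0.le] at h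
    rw [show w - p = -(p - w) by abel, inner_neg_left]
    nlinarith
  have hlim : Tendsto (fun t : ℝ => α * (Z - P) + t * (‖z - p‖ ^ 2 / 2)) (𝓝[>] 0)
      (𝓝 (α * (Z - P))) := by
    refine tendsto_nhdsWithin_of_tendsto_nhds (Continuous.tendsto' ?_ _ _ (by simp))
    fun_prop
  exact ge_of_tendsto hlim (eventually_of_mem (Ioc_mem_nhdsGT one_pos) hsegment)

lemma residual_le (hproper : ∃ z, g z ≠ ⊤) (hnobot : ∀ z, g z ≠ ⊥) (hconv : ConvexEReal g)
    {c : ℝ} (hc : 0 < c) (hc1 : c ≤ 1) (hcα : c ≤ α) {y v e q : EuclideanSpace ℝ (Fin N)}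
    (hp : IsProxPt g α (y - α • v + e) p) (hq : IsProxPt g 1 (y - v) q) :
    c * ‖y - q‖ ≤ ‖p - y‖ + ‖e‖ := by
  have hα : 0 < α := hc.trans_le hcα
  have hP := (EReal.coe_toReal (hp.ne_top hproper hα) (hnobot p)).symm
  have hQ := (EReal.coe_toReal (hq.ne_top hproper one_pos) (hnobot q)).symm
  have hpq := hp.inner_le hconv hα.le hP hQ
  have hqp := hq.inner_le hconv zero_le_one hQ hP
  have hmonotone : ⟪(y - p) + e - α • (y - q), (y - p) - (y - q)⟫ ≤ 0 := by
    rw [show (y - p) + e - α • (y - q) = (y - α • v + e - p) - α • (y - v - q) by module,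
      sub_sub_sub_cancel_left, inner_sub_left, real_inner_smul_left]
    rw [← neg_sub q p, inner_neg_right] at hqp
    nlinarith
  rw [norm_sub_rev p y]
  exact mul_norm_le_add_norm_of_inner_nonpos_of_le hc.le hc1 hcα hmonotone

end IsProxPt

theorem ipiano_residual_sum_bound_general
    (f' : EuclideanSpace ℝ (Fin N) → EuclideanSpace ℝ (Fin N))
    (g : EuclideanSpace ℝ (Fin N) → EReal)
    (hproper : ∃ z, g z ≠ ⊤) (hnobot : ∀ z, g z ≠ ⊥)
    (hconv : ∀ (x y : EuclideanSpace ℝ (Fin N)) (a b : ℝ), 0 ≤ a → 0 ≤ b → a + b = 1 →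
      g (a • x + b • y) ≤ (a : EReal) * g x + (b : EReal) * g y)
    (c₁ : ℝ) (hc₁ : 0 < c₁) (hc₁1 : c₁ ≤ 1)
    (α β : ℕ → ℝ) (hα : ∀ n, c₁ ≤ α n) (hβ : ∀ n, 0 ≤ β n ∧ β n < 1)
    (x : ℕ → EuclideanSpace ℝ (Fin N)) (Q : ℕ → EuclideanSpace ℝ (Fin N))
    -- the iPiano update (with the convention `x^{-1} = x^0`, via truncated subtraction)
    (hup : ∀ n, IsProxPt g (α n)
        (x n - α n • f' (x n) + β n • (x n - x (n - 1))) (x (n + 1)))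
    -- `Q n = prox_g(x^n - ∇f(x^n))`, so that `r(x^n) = x^n - Q n`
    (hQ : ∀ n, IsProxPt g 1 (x n - f' (x n)) (Q n)) :
    ∀ M : ℕ, ∑ n ∈ Finset.range (M + 1), ‖x n - Q n‖
        ≤ (2 / c₁) * ∑ n ∈ Finset.range (M + 1), ‖x (n + 1) - x n‖ := by
  intro M
  have hstep : ∀ n, c₁ * ‖x n - Q n‖ ≤ ‖x (n + 1) - x n‖ + β n * ‖x n - x (n - 1)‖ := by
    intro n
    have h := (hup n).residual_le hproper hnobot hconv hc₁ hc₁1 (hα n) (hQ n)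
    rwa [norm_smul, Real.norm_of_nonneg (hβ n).1] at h
  have hmomentum : ∑ n ∈ Finset.range (M + 1), β n * ‖x n - x (n - 1)‖
      ≤ ∑ n ∈ Finset.range (M + 1), ‖x (n + 1) - x n‖ :=
    (Finset.sum_le_sum fun n _ => mul_le_of_le_one_left (norm_nonneg _) (hβ n).2.le).trans
      (sum_range_norm_sub_pred_le x M)
  rw [div_mul_eq_mul_div, le_div_iff₀ hc₁, Finset.sum_mul]
  calc ∑ n ∈ Finset.range (M + 1), ‖x n - Q n‖ * c₁
      ≤ ∑ n ∈ Finset.range (M + 1), (‖x (n + 1) - x n‖ + β n * ‖x n - x (n - 1)‖) :=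
        Finset.sum_le_sum fun n _ => (mul_comm _ _).trans_le (hstep n)
    _ ≤ 2 * ∑ n ∈ Finset.range (M + 1), ‖x (n + 1) - x n‖ := by
        rw [Finset.sum_add_distrib]
        linarith

/-- **Summed residual bound.** For `(x^n)` generated by iPiano with `α_n ≥ c₁ ∈ (0,1]`,
`β_n ∈ [0,1)` and `x^{-1} = x^0`, for all `N`,
`∑_{n=0}^N ‖r(x^n)‖ ≤ (2/c₁) ∑_{n=0}^N ‖x^{n+1} - x^n‖`,
where `r(x) = x - prox_g(x - ∇f x)` is the proximal residual at step size 1 and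
`Q n = prox_g(x^n - ∇f(x^n))`. -/
theorem ipiano_residual_sum_bound
    (f : EuclideanSpace ℝ (Fin N) → ℝ)
    (f' : EuclideanSpace ℝ (Fin N) → EuclideanSpace ℝ (Fin N))
    (hf : ∀ y, HasGradientAt f (f' y) y) (hf' : Continuous f')
    (g : EuclideanSpace ℝ (Fin N) → EReal)
    (hproper : ∃ z, g z ≠ ⊤) (hnobot : ∀ z, g z ≠ ⊥)
    (hlsc : LowerSemicontinuous g)
    (hconv : ∀ (x y : EuclideanSpace ℝ (Fin N)) (a b : ℝ), 0 ≤ a → 0 ≤ b → a + b = 1 →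
      g (a • x + b • y) ≤ (a : EReal) * g x + (b : EReal) * g y)
    (c₁ : ℝ) (hc₁ : 0 < c₁) (hc₁1 : c₁ ≤ 1)
    (α β : ℕ → ℝ) (hα : ∀ n, c₁ ≤ α n) (hβ : ∀ n, 0 ≤ β n ∧ β n < 1)
    (x : ℕ → EuclideanSpace ℝ (Fin N)) (Q : ℕ → EuclideanSpace ℝ (Fin N))
    -- the iPiano update (with the convention `x^{-1} = x^0`, via truncated subtraction)
    (hup : ∀ n, IsProxPt g (α n)
        (x n - α n • f' (x n) + β n • (x n - x (n - 1))) (x (n + 1)))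
    -- `Q n = prox_g(x^n - ∇f(x^n))`, so that `r(x^n) = x^n - Q n`
    (hQ : ∀ n, IsProxPt g 1 (x n - f' (x n)) (Q n)) :
    ∀ M : ℕ, ∑ n ∈ Finset.range (M + 1), ‖x n - Q n‖
        ≤ (2 / c₁) * ∑ n ∈ Finset.range (M + 1), ‖x (n + 1) - x n‖ :=
  ipiano_residual_sum_bound_general f' g hproper hnobot hconv c₁ hc₁ hc₁1 α β hα hβ x Q hup hQ
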